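/- Let (M,J,g) be an almost Hermitian manifold of complex dimension n. At each point p, the average of the Riemannian holomorphic sectional curvature over the unit sphere S_p(M) = {ξ ∈ T_p^{1,0}M : |ξ| = 1} satisfies ∫_{S_p(M)} H_p(ξ) dV_ξ = (Vol(S^{2n−1}) / (4n(n+1))) · (s + 3 s_J)(p), where s is the Riemannian scalar curvature and s_J the J-scalar curvature. In particular, if H_p(ξ) ≥ 0 for all p and ξ, then s + 3 s_J ≥ 0 pointwise. -/

import Mathlib

/-- The Kodaira dimension of a compact almost complex manifold `(M,J)` (in the sense of
Chen–Zhang), computed from its plurigenera `P m = dim_ℂ H⁰(M, K_M^{⊗m})`: it equals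
`⊥ = -∞` if every plurigenus `P m`, `m ≥ 1`, vanishes, and otherwise equals
`limsup_{m → ∞} (log P m / log m)`, viewed as an extended real number. -/
noncomputable def kodairaDimension (P : ℕ → ℕ) : EReal := by
  classical
  exact if ∀ m : ℕ, 1 ≤ m → P m = 0 then ⊥
    else Filter.limsup (fun m : ℕ => ((Real.log (P m : ℝ) / Real.log (m : ℝ) : ℝ) : EReal))
      Filter.atTop

/-- A compact almost Hermitian manifold `(M, J, g)` of complex dimension `n`, recorded through
the scalar-valued geometric quantities attached to it: the Riemannian volume measure `dV_g`,
the Riemannian scalar curvature `s`, the `J`-scalar curvature `s_J`, the two Chern scalar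
curvatures `S₁^Ch`, `S₂^Ch`, the pointwise squared norms of the Gray–Hervella components
`(dF)⁻`, `(dF)⁺`, `(dF)₀⁺`, `N⁰`, `α_F` of `∇F` (where `F(X,Y) = g(JX,Y)` is the fundamental
`2`-form, `α_F = Jδ^g F` the Lee form and `N⁰ = N - 𝔟N`), the codifferential `δ^g α_F` of the
Lee form, together with the plurigenera of `(M,J)` and the relevant complex-geometric
properties of `(M,J,g)`.  The standard pointwise identities relating these quantities
(Gauduchon's formulas) are included as fields, pinning down their meaning. -/
structure CompactAlmostHermitian where
  /-- the underlying manifold -/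
  M : Type
  [topM : TopologicalSpace M]
  [cptM : CompactSpace M]
  [neM : Nonempty M]
  [measM : MeasurableSpace M]
  [borelM : BorelSpace M]
  /-- the complex dimension -/
  n : ℕ
  /-- the Riemannian volume measure `dV_g` -/
  vol : MeasureTheory.Measure M
  vol_finite : MeasureTheory.IsFiniteMeasure vol
  vol_pos : vol.IsOpenPosMeasure
  /-- the Riemannian scalar curvature `s` of `g` -/
  s : M → ℝ
  /-- the `J`-scalar curvature (`⋆`-scalar curvature) `s_J` of `(J,g)`,
  `s_J = Σ_A Ric_J(e_A, e_A)` with `Ric_J(X,Y) = Σ_A R(e_A, X, J e_A, J Y)` -/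
  sJ : M → ℝ
  /-- the Chern scalar curvature `S₁^Ch = Σ_{i,j} R^Ch(u_ī, u_i, u_j, u_j̄)` -/
  S1 : M → ℝ
  /-- the second Chern scalar curvature `S₂^Ch = Σ_{i,j} R^Ch(u_ī, u_j, u_i, u_j̄)` -/
  S2 : M → ℝ
  /-- pointwise squared norm `|(dF)⁻|²` of the `(3,0)+(0,3)`-component of `dF` -/
  dFminusSq : M → ℝ
  /-- pointwise squared norm `|(dF)⁺|²` of the `(2,1)+(1,2)`-component of `dF` -/
  dFplusSq : M → ℝ
  /-- pointwise squared norm `|(dF)₀⁺|²` of the primitive part of `(dF)⁺` -/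
  dFplus0Sq : M → ℝ
  /-- pointwise squared norm `|dF|²` -/
  dFSq : M → ℝ
  /-- pointwise squared norm `|N⁰|²`, where `N⁰ = N - 𝔟N` is the Nijenhuis tensor minus
  its totally skew-symmetric part -/
  NzeroSq : M → ℝ
  /-- pointwise squared norm `|α_F|²` of the Lee form `α_F = Jδ^g F` -/
  leeSq : M → ℝ
  /-- the codifferential `δ^g α_F` of the Lee form -/
  divLee : M → ℝ
  cont_s : Continuous s
  cont_sJ : Continuous sJ
  cont_S1 : Continuous S1
  cont_S2 : Continuous S2
  cont_dFminusSq : Continuous dFminusSq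
  cont_dFplusSq : Continuous dFplusSq
  cont_dFplus0Sq : Continuous dFplus0Sq
  cont_dFSq : Continuous dFSq
  cont_NzeroSq : Continuous NzeroSq
  cont_leeSq : Continuous leeSq
  cont_divLee : Continuous divLee
  nn_dFminusSq : ∀ p, 0 ≤ dFminusSq p
  nn_dFplusSq : ∀ p, 0 ≤ dFplusSq p
  nn_dFplus0Sq : ∀ p, 0 ≤ dFplus0Sq p
  nn_dFSq : ∀ p, 0 ≤ dFSq p
  nn_NzeroSq : ∀ p, 0 ≤ NzeroSq p
  nn_leeSq : ∀ p, 0 ≤ leeSq p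
  /-- `dF` vanishes exactly when both `(dF)⁺` and `(dF)⁻` do:
  `|dF|² = |(dF)⁺|² + |(dF)⁻|²` -/
  dF_decomp : ∀ p, dFSq p = dFplusSq p + dFminusSq p
  /-- `(dF)⁺ = (dF)₀⁺ + α_F ∧ F/(n-1)`, so `|(dF)⁺|² = |(dF)₀⁺|² + |α_F|²/(n-1)` -/
  dFplus_decomp : ∀ p, dFplusSq p = dFplus0Sq p + leeSq p / ((n : ℝ) - 1)
  /-- the relation between the Chern scalar curvature `S₁^Ch` and
  the Riemannian scalar curvature `s` -/
  S1_eq : ∀ p, S1 p = s p / 2 - (5 / 12) * dFminusSq p + (1 / 16) * NzeroSq p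
      + (1 / 4) * dFplus0Sq p + leeSq p / (4 * ((n : ℝ) - 1)) - (1 / 2) * divLee p
  /-- the relation between the second Chern scalar curvature `S₂^Ch` and
  the Riemannian scalar curvature `s` -/
  S2_eq : ∀ p, S2 p = s p / 2 - (1 / 12) * dFminusSq p + (1 / 32) * NzeroSq p
      + (1 / 4) * dFplus0Sq p + (1 / (4 * ((n : ℝ) - 1)) - 1 / 2) * leeSq p - divLee p
  /-- the relation between the `J`-scalar curvature and the Riemannian scalar curvature -/
  sJ_eq : ∀ p, sJ p = s p - (2 / 3) * dFminusSq p + (1 / 4) * NzeroSq p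
      - leeSq p - 2 * divLee p
  /-- the plurigenera `P m = dim_ℂ H⁰(M, K_M^{⊗m})` of `(M,J)`, the complex dimensions of the
  spaces of pseudoholomorphic (i.e. `∂̄`-closed) sections of the pluricanonical bundles -/
  plurigenus : ℕ → ℕ
  /-- `(M,J,g)` is a Kähler manifold, i.e. `∇F = 0` -/
  isKaehler : Prop
  isKaehler_iff : isKaehler ↔ ∀ p, dFSq p = 0 ∧ NzeroSq p = 0
  /-- the first Chern class `c₁(M,J)` vanishes in real cohomology -/
  c1Zero : Prop
  /-- the Chern–Ricci form `ρ_g` of the metric `g` vanishes identically -/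
  chernRicciZero : Prop
  /-- `(M,J)` is a Moishezon manifold (bimeromorphic to a projective manifold) -/
  moishezon : Prop
  /-- `(M,J)` is uniruled (covered by rational curves) -/
  uniruled : Prop
  /-- the Riemannian metric `g` is flat -/
  flatMetric : Prop

attribute [instance] CompactAlmostHermitian.topM CompactAlmostHermitian.cptM
  CompactAlmostHermitian.neM CompactAlmostHermitian.measM CompactAlmostHermitian.borelM
  CompactAlmostHermitian.vol_finite

/-- A compact almost Hermitian manifold together with the components
`Rc p i j k l = R(u_ī, u_j, u_k, u_l̄)` of its (complexified) Riemannian curvature tensor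
in a local unitary frame `{u_i}` at each point `p`, pinned to the two scalar curvatures by
the standard trace identities `s_J = 2 Σ_{i,j} R(u_ī,u_i,u_j,u_j̄)` and
`s = 4 Σ_{i,j} R(u_ī,u_j,u_i,u_j̄) − 2 Σ_{i,j} R(u_ī,u_i,u_j,u_j̄)`.  The Riemannian
holomorphic sectional curvature in the direction of a `(1,0)`-vector `ξ = Σ ξ^i u_i` is
`H(ξ) = R(ξ̄,ξ,ξ,ξ̄)/|ξ|⁴ = (Σ_{i,j,k,l} Rc i j k l ξ̄^i ξ^j ξ^k ξ̄^l)/|ξ|⁴`. -/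
structure CompactAlmostHermitianCurv extends CompactAlmostHermitian where
  /-- components `R(u_ī, u_j, u_k, u_l̄)` of the Riemannian curvature tensor in a local
  unitary frame -/
  Rc : M → Fin n → Fin n → Fin n → Fin n → ℂ
  /-- `s_J = 2 Σ_{i,j} R(u_ī,u_i,u_j,u_j̄)` -/
  sJ_trace : ∀ p, (sJ p : ℂ) = 2 * ∑ i, ∑ j, Rc p i i j j
  /-- `s = 4 Σ_{i,j} R(u_ī,u_j,u_i,u_j̄) − 2 Σ_{i,j} R(u_ī,u_i,u_j,u_j̄)` -/
  s_trace : ∀ p, (s p : ℂ) = 4 * (∑ i, ∑ j, Rc p i j i j) - 2 * ∑ i, ∑ j, Rc p i i j j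

noncomputable instance euclideanComplexMeasurableSpace (n : ℕ) :
    MeasurableSpace (EuclideanSpace ℂ (Fin n)) := MeasurableSpace.comap WithLp.ofLp MeasurableSpace.pi

instance euclideanComplexBorel (n : ℕ) : BorelSpace (EuclideanSpace ℂ (Fin n)) :=
  PiLp.borelSpace 2

noncomputable instance euclideanComplexRealInner (n : ℕ) :
    InnerProductSpace ℝ (EuclideanSpace ℂ (Fin n)) :=
  InnerProductSpace.rclikeToReal ℂ _

noncomputable instance euclideanComplexMeasureSpace (n : ℕ) :
    MeasureTheory.MeasureSpace (EuclideanSpace ℂ (Fin n)) :=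
  measureSpaceOfInnerProductSpace

/-- The standard (Riemannian) volume measure on the unit sphere
`S^{2n-1} = {ξ ∈ ℂⁿ : |ξ| = 1}`, identifying the space of unit `(1,0)`-tangent vectors in a
unitary frame with the round sphere `S^{2n-1} ⊂ ℂⁿ`. -/
noncomputable def complexSphereMeasure (n : ℕ) :
    MeasureTheory.Measure (Metric.sphere (0 : EuclideanSpace ℂ (Fin n)) 1) :=
  (MeasureTheory.volume : MeasureTheory.Measure (EuclideanSpace ℂ (Fin n))).toSphere


section BergerAuxSection
open MeasureTheory Metric Set Pointwise ComplexConjugate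

variable {V : Type*} [NormedAddCommGroup V] [InnerProductSpace ℝ V] [FiniteDimensional ℝ V]
  [MeasurableSpace V] [BorelSpace V]

/-- map on the sphere induced by a linear isometry equiv -/
def sphereMap (e : V ≃ₗᵢ[ℝ] V) (ξ : sphere (0 : V) 1) : sphere (0 : V) 1 :=
  ⟨e ξ, by
    have := ξ.2
    simp only [mem_sphere_iff_norm, sub_zero] at this ⊢
    simp [this]⟩

omit [FiniteDimensional ℝ V] [MeasurableSpace V] [BorelSpace V] in
lemma continuous_sphereMap (e : V ≃ₗᵢ[ℝ] V) : Continuous (sphereMap e) := by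
  apply Continuous.subtype_mk
  exact e.continuous.comp continuous_subtype_val

lemma toSphere_map (e : V ≃ₗᵢ[ℝ] V) :
    Measure.map (sphereMap e) (volume : Measure V).toSphere = (volume : Measure V).toSphere := by
  ext s hs
  rw [Measure.map_apply (continuous_sphereMap e).measurable hs]
  have hpre : MeasurableSet (sphereMap e ⁻¹' s) := (continuous_sphereMap e).measurable hs
  rw [Measure.toSphere_apply' _ hpre, Measure.toSphere_apply' _ hs]
  congr 1
  have himg : (↑) '' (sphereMap e ⁻¹' s) = e.symm '' ((↑) '' s) := by
    ext x
    constructor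
    · rintro ⟨ξ, hξ, rfl⟩
      exact ⟨e ξ, ⟨sphereMap e ξ, hξ, rfl⟩, by simp⟩
    · rintro ⟨y, ⟨η, hη, rfl⟩, rfl⟩
      have hmem : e.symm ↑η ∈ sphere (0 : V) 1 := by
        have := η.2
        simp only [mem_sphere_iff_norm, sub_zero] at this ⊢
        simp [this]
      refine ⟨⟨e.symm η, hmem⟩, ?_, rfl⟩
      show sphereMap e _ ∈ s
      have : sphereMap e ⟨e.symm ↑η, hmem⟩ = η := by
        apply Subtype.ext
        simp [sphereMap]
      rw [this]; exact hη
  rw [himg]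
  have hsmul : Ioo (0:ℝ) 1 • (e.symm '' ((↑) '' s)) = e.symm '' (Ioo (0:ℝ) 1 • ((↑) '' s)) := by
    ext x
    simp only [mem_smul_set, Set.mem_image]
    constructor
    · rintro ⟨r, hr, y, ⟨z, hz, rfl⟩, rfl⟩
      exact ⟨r • z, ⟨r, hr, z, hz, rfl⟩, by simp⟩
    · rintro ⟨y, ⟨r, hr, z, hz, rfl⟩, rfl⟩
      exact ⟨r, hr, e.symm z, ⟨z, hz, rfl⟩, by simp⟩
  rw [hsmul]
  have himg2 : e.symm '' (Ioo (0:ℝ) 1 • ((↑) '' s)) = e ⁻¹' (Ioo (0:ℝ) 1 • ((↑) '' s)) := by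
    ext x
    constructor
    · rintro ⟨y, hy, rfl⟩
      simpa using hy
    · intro hx
      exact ⟨e x, hx, by simp⟩
  rw [himg2]
  exact e.measurePreserving.measure_preimage_emb
    e.toMeasurableEquiv.measurableEmbedding _

lemma integral_sphereMap (e : V ≃ₗᵢ[ℝ] V) (f : sphere (0 : V) 1 → ℂ)
    (hf : Continuous f) :
    ∫ ξ, f (sphereMap e ξ) ∂(volume : Measure V).toSphere
      = ∫ ξ, f ξ ∂(volume : Measure V).toSphere := by
  conv_rhs => rw [← toSphere_map e]
  rw [integral_map (continuous_sphereMap e).aemeasurable]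
  exact hf.aestronglyMeasurable

namespace Berger

abbrev En (n : ℕ) := EuclideanSpace ℂ (Fin n)
abbrev Sp (n : ℕ) := Metric.sphere (0 : En n) 1

variable {n : ℕ}

-- coordinate continuity
lemma continuous_coord (i : Fin n) : Continuous fun ξ : Sp n => (ξ : En n) i :=
  (continuous_apply i).comp ((PiLp.continuous_ofLp _ _).comp continuous_subtype_val)

-- the phase isometry
def IC : Circle := ⟨Complex.I, by simp [Submonoid.unitSphere]⟩

noncomputable def phase (t : Fin n) : En n ≃ₗᵢ[ℝ] En n :=
  LinearIsometryEquiv.piLpCongrRight 2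
    (fun m => if m = t then rotation IC else LinearIsometryEquiv.refl ℝ ℂ)

lemma phase_apply (t m : Fin n) (x : En n) :
    phase t x m = (if m = t then Complex.I else 1) * x m := by
  rw [phase, LinearIsometryEquiv.piLpCongrRight_apply]
  subst_eqs
  by_cases h : m = t
  · subst h; simp [rotation_apply]; exact Or.inl rfl
  · simp [h]


-- the permutation isometry
noncomputable def permIso (π : Equiv.Perm (Fin n)) : En n ≃ₗᵢ[ℝ] En n :=
  LinearIsometryEquiv.piLpCongrLeft 2 ℝ ℂ π

lemma permIso_apply (π : Equiv.Perm (Fin n)) (x : En n) (m : Fin n) :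
    permIso π x m = x (π.symm m) := by
  rw [permIso, LinearIsometryEquiv.piLpCongrLeft_apply]
  rfl







noncomputable def mixFun (a b : Fin n) (x : En n) : En n := WithLp.toLp 2 fun m =>
  if m = a then (x a + x b) / (Real.sqrt 2 : ℂ)
  else if m = b then (x a - x b) / (Real.sqrt 2 : ℂ) else x m

lemma sqrt2_mul_self : ((Real.sqrt 2 : ℝ) : ℂ) * ((Real.sqrt 2 : ℝ) : ℂ) = 2 := by
  rw [← Complex.ofReal_mul, Real.mul_self_sqrt (by norm_num)]
  norm_num

lemma mixFun_apply_a (a b : Fin n) (x : En n) :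
    mixFun a b x a = (x a + x b) / (Real.sqrt 2 : ℂ) := by simp [mixFun]

lemma mixFun_apply_b (a b : Fin n) (hab : a ≠ b) (x : En n) :
    mixFun a b x b = (x a - x b) / (Real.sqrt 2 : ℂ) := by simp [mixFun, hab.symm]

lemma mixFun_apply_other (a b m : Fin n) (hma : m ≠ a) (hmb : m ≠ b) (x : En n) :
    mixFun a b x m = x m := by simp [mixFun, hma, hmb]

noncomputable def mixL (a b : Fin n) : En n →ₗ[ℝ] En n where
  toFun := mixFun a b
  map_add' x y := by
    ext m
    show mixFun a b (x + y) m = mixFun a b x m + mixFun a b y m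
    simp only [mixFun, PiLp.add_apply, PiLp.toLp_apply]
    split_ifs <;> ring
  map_smul' r x := by
    ext m
    show mixFun a b (r • x) m = r • mixFun a b x m
    simp only [mixFun, PiLp.smul_apply, PiLp.toLp_apply, Complex.real_smul]
    split_ifs <;> ring

lemma mixFun_invol (a b : Fin n) (hab : a ≠ b) (x : En n) :
    mixFun a b (mixFun a b x) = x := by
  ext m
  by_cases h1 : m = a
  · rw [h1, mixFun_apply_a, mixFun_apply_a, mixFun_apply_b a b hab,
        ← add_div, div_div, sqrt2_mul_self]
    ring
  · by_cases h2 : m = b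
    · rw [h2, mixFun_apply_b a b hab, mixFun_apply_a, mixFun_apply_b a b hab,
          ← sub_div, div_div, sqrt2_mul_self]
      ring
    · rw [mixFun_apply_other a b m h1 h2, mixFun_apply_other a b m h1 h2]

lemma mixFun_norm (a b : Fin n) (hab : a ≠ b) (x : En n) :
    ‖mixFun a b x‖ = ‖x‖ := by
  rw [EuclideanSpace.norm_eq, EuclideanSpace.norm_eq]
  congr 1
  have hb : b ∈ (Finset.univ.erase a) := Finset.mem_erase.2 ⟨hab.symm, Finset.mem_univ b⟩
  have ha : a ∈ (Finset.univ : Finset (Fin n)) := Finset.mem_univ a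
  rw [← Finset.add_sum_erase _ _ ha, ← Finset.add_sum_erase _ _ hb,
      ← Finset.add_sum_erase _ (fun i => ‖x i‖^2) ha,
      ← Finset.add_sum_erase _ (fun i => ‖x i‖^2) hb]
  have hrest : ∑ m ∈ (Finset.univ.erase a).erase b, ‖mixFun a b x m‖ ^ 2
      = ∑ m ∈ (Finset.univ.erase a).erase b, ‖x m‖ ^ 2 := by
    apply Finset.sum_congr rfl
    intro m hm
    have hma : m ≠ a := Finset.ne_of_mem_erase (Finset.mem_of_mem_erase hm)
    have hmb : m ≠ b := Finset.ne_of_mem_erase hm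
    rw [mixFun_apply_other a b m hma hmb]
  rw [hrest, mixFun_apply_a, mixFun_apply_b a b hab]
  have hnorm : ‖((Real.sqrt 2 : ℝ) : ℂ)‖ = Real.sqrt 2 := by
    rw [Complex.norm_real, Real.norm_eq_abs, abs_of_nonneg (Real.sqrt_nonneg 2)]
  have hpar := parallelogram_law_with_norm ℝ (x a) (x b)
  have h2 : Real.sqrt 2 ^ 2 = 2 := Real.sq_sqrt (by norm_num)
  rw [norm_div, norm_div, hnorm, div_pow, div_pow, h2]
  nlinarith [hpar, sq_nonneg (‖x a + x b‖), sq_nonneg (‖x a - x b‖)]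

noncomputable def mixLE (a b : Fin n) (hab : a ≠ b) : En n ≃ₗ[ℝ] En n where
  toFun := mixFun a b
  map_add' := (mixL a b).map_add'
  map_smul' := (mixL a b).map_smul'
  invFun := mixFun a b
  left_inv := mixFun_invol a b hab
  right_inv := mixFun_invol a b hab

noncomputable def mix (a b : Fin n) (hab : a ≠ b) : En n ≃ₗᵢ[ℝ] En n :=
  ⟨mixLE a b hab, mixFun_norm a b hab⟩

lemma mix_apply_a (a b : Fin n) (hab : a ≠ b) (x : En n) :
    mix a b hab x a = (x a + x b) / (Real.sqrt 2 : ℂ) := mixFun_apply_a a b x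

lemma mix_apply_b (a b : Fin n) (hab : a ≠ b) (x : En n) :
    mix a b hab x b = (x a - x b) / (Real.sqrt 2 : ℂ) := mixFun_apply_b a b hab x



end Berger

namespace Berger
variable {n : ℕ}
open ComplexConjugate

noncomputable def σm (n : ℕ) : Measure (Sp n) := complexSphereMeasure n

instance : IsFiniteMeasure (σm n) := by
  unfold σm complexSphereMeasure; infer_instance

def mfn (i j k l : Fin n) (ξ : Sp n) : ℂ :=
  conj ((ξ : En n) i) * (ξ : En n) j * (ξ : En n) k * conj ((ξ : En n) l)

lemma continuous_mfn (i j k l : Fin n) : Continuous (mfn i j k l) := by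
  unfold mfn
  exact (((continuous_star.comp (continuous_coord i)).mul (continuous_coord j)).mul
    (continuous_coord k)).mul (continuous_star.comp (continuous_coord l))

lemma integrable_cont {f : Sp n → ℂ} (hf : Continuous f) : Integrable f (σm n) :=
  hf.integrable_of_hasCompactSupport (HasCompactSupport.of_compactSpace f)

lemma int_mfn (i j k l : Fin n) : Integrable (mfn i j k l) (σm n) :=
  integrable_cont (continuous_mfn i j k l)

noncomputable def Mint (i j k l : Fin n) : ℂ := ∫ ξ, mfn i j k l ξ ∂ σm n

lemma Mint_comp (e : En n ≃ₗᵢ[ℝ] En n) (i j k l : Fin n) :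
    ∫ ξ, mfn i j k l (sphereMap e ξ) ∂ σm n = Mint i j k l :=
  integral_sphereMap e (mfn i j k l) (continuous_mfn i j k l)

lemma sphereMap_coord (e : En n ≃ₗᵢ[ℝ] En n) (ξ : Sp n) :
    ((sphereMap e ξ : Sp n) : En n) = e (ξ : En n) := rfl

lemma mfn_phase (t i j k l : Fin n) (ξ : Sp n) :
    mfn i j k l (sphereMap (phase t) ξ) =
      ((if j = t then Complex.I else 1) * (if k = t then Complex.I else 1) *
       (if i = t then -Complex.I else 1) * (if l = t then -Complex.I else 1)) *
      mfn i j k l ξ := by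
  unfold mfn
  rw [sphereMap_coord, phase_apply, phase_apply, phase_apply, phase_apply]
  by_cases hi : i = t <;> by_cases hj : j = t <;> by_cases hk : k = t <;>
    by_cases hl : l = t <;>
    simp only [hi, hj, hk, hl, if_true, if_false, if_pos, if_neg, map_mul, Complex.conj_I,
      map_one, one_mul, mul_one] <;> ring

lemma Mint_phase (t i j k l : Fin n) :
    Mint i j k l =
      ((if j = t then Complex.I else 1) * (if k = t then Complex.I else 1) *
       (if i = t then -Complex.I else 1) * (if l = t then -Complex.I else 1)) *
      Mint i j k l := by
  conv_lhs => rw [← Mint_comp (phase t) i j k l]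
  rw [show (fun ξ => mfn i j k l (sphereMap (phase t) ξ)) = fun ξ =>
      ((if j = t then Complex.I else 1) * (if k = t then Complex.I else 1) *
       (if i = t then -Complex.I else 1) * (if l = t then -Complex.I else 1)) *
      mfn i j k l ξ from funext (mfn_phase t i j k l), integral_const_mul]
  rfl

lemma Mint_zero_of_factor {i j k l : Fin n} {u : ℂ} (hu : u ≠ 1)
    (h : Mint i j k l = u * Mint i j k l) : Mint i j k l = 0 := by
  have h2 : (1 - u) * Mint i j k l = 0 := by linear_combination h
  rcases mul_eq_zero.1 h2 with h3 | h3
  · exact absurd (by linear_combination -h3 : u = 1) hu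
  · exact h3

lemma I_ne_one : Complex.I ≠ 1 := by
  intro h
  have := congrArg Complex.im h
  simpa using this

lemma neg_one_ne_one' : (-1 : ℂ) ≠ 1 := by norm_num

lemma Mint_vanish {i j k l : Fin n} (h : ¬((i = j ∧ k = l) ∨ (j = l ∧ k = i))) :
    Mint i j k l = 0 := by
  push_neg at h
  obtain ⟨h1, h2⟩ := h
  by_cases hij : i = j
  · subst hij
    have hkl : k ≠ l := h1 rfl
    have hlk : ¬(l = k) := fun hh => hkl hh.symm
    have hph := Mint_phase k i i k l
    rw [if_pos rfl, if_neg hlk, mul_one] at hph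
    have hu : ((if i = k then Complex.I else 1) * Complex.I *
        (if i = k then -Complex.I else 1)) = Complex.I := by
      by_cases hik : i = k <;> simp [hik]
    rw [hu] at hph
    exact Mint_zero_of_factor I_ne_one hph
  · by_cases hjl : j = l
    · subst hjl
      have hki : k ≠ i := h2 rfl
      have hik : ¬(i = k) := fun hh => hki hh.symm
      have hph := Mint_phase k i j k j
      rw [if_pos rfl, if_neg hik, mul_one] at hph
      have hu : ((if j = k then Complex.I else 1) * Complex.I *
          (if j = k then -Complex.I else 1)) = Complex.I := by
        by_cases hjk : j = k <;> simp [hjk]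
      rw [hu] at hph
      exact Mint_zero_of_factor I_ne_one hph
    · have hlj : ¬(l = j) := fun hh => hjl hh.symm
      have hij' : ¬(i = j) := hij
      have hph := Mint_phase j i j k l
      rw [if_pos rfl, if_neg hij', if_neg hlj, mul_one, mul_one] at hph
      by_cases hkj : k = j
      · rw [if_pos hkj, Complex.I_mul_I] at hph
        exact Mint_zero_of_factor neg_one_ne_one' hph
      · rw [if_neg hkj, mul_one] at hph
        exact Mint_zero_of_factor I_ne_one hph
end Berger

namespace Berger
variable {n : ℕ}
open ComplexConjugate

lemma mfn_perm (π : Equiv.Perm (Fin n)) (i j k l : Fin n) (ξ : Sp n) :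
    mfn i j k l (sphereMap (permIso π) ξ) =
      mfn (π.symm i) (π.symm j) (π.symm k) (π.symm l) ξ := by
  unfold mfn
  rw [sphereMap_coord, permIso_apply, permIso_apply, permIso_apply, permIso_apply]

lemma Mint_perm (π : Equiv.Perm (Fin n)) (a b c d : Fin n) :
    Mint (π a) (π b) (π c) (π d) = Mint a b c d := by
  conv_lhs => rw [← Mint_comp (permIso π) (π a) (π b) (π c) (π d)]
  rw [show (fun ξ => mfn (π a) (π b) (π c) (π d) (sphereMap (permIso π) ξ)) = mfn a b c d by
    funext ξ; rw [mfn_perm]; simp]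
  rfl

lemma norm_coe_sphere (ξ : Sp n) : ‖(ξ : En n)‖ = 1 := by
  have := ξ.2
  simpa [mem_sphere_iff_norm] using this

lemma sum_normsq_coord (ξ : Sp n) : (∑ a, conj ((ξ : En n) a) * (ξ : En n) a) = 1 := by
  have hsq : (∑ a, ‖(ξ : En n) a‖ ^ 2) = 1 := by
    have h := norm_coe_sphere ξ
    rw [EuclideanSpace.norm_eq] at h
    rwa [Real.sqrt_eq_one] at h
  have : ∀ a : Fin n, conj ((ξ : En n) a) * (ξ : En n) a = ((‖(ξ : En n) a‖ ^ 2 : ℝ) : ℂ) := by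
    intro a
    rw [mul_comm, Complex.mul_conj, Complex.normSq_eq_norm_sq]
  rw [Finset.sum_congr rfl fun a _ => this a, ← Complex.ofReal_sum, hsq, Complex.ofReal_one]

lemma Mint_sum : (∑ a, ∑ b, Mint a a b b (n := n)) = (((σm n) Set.univ).toReal : ℂ) := by
  have hrow : ∀ a : Fin n, (∑ b, Mint a a b b) = ∫ ξ, (∑ b, mfn a a b b ξ) ∂ σm n :=
    fun a => (integral_finset_sum _ fun b _ => int_mfn a a b b).symm
  rw [Finset.sum_congr rfl fun a _ => hrow a,
    ← integral_finset_sum _ fun a _ => integrable_finset_sum _ fun b _ => int_mfn a a b b]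
  have hsum : ∀ ξ : Sp n, (∑ a, ∑ b, mfn a a b b ξ) = 1 := by
    intro ξ
    have := sum_normsq_coord ξ
    calc (∑ a, ∑ b, mfn a a b b ξ)
        = ∑ a, ∑ b, (conj ((ξ:En n) a) * (ξ:En n) a) * (conj ((ξ:En n) b) * (ξ:En n) b) := by
          refine Finset.sum_congr rfl fun a _ => Finset.sum_congr rfl fun b _ => ?_
          unfold mfn; ring
      _ = (∑ a, conj ((ξ:En n) a) * (ξ:En n) a) * (∑ b, conj ((ξ:En n) b) * (ξ:En n) b) := by
          rw [Finset.sum_mul_sum]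
      _ = 1 := by rw [this, one_mul]
  rw [show (fun ξ : Sp n => ∑ a, ∑ b, mfn a a b b ξ) = fun _ => (1:ℂ) from funext hsum]
  rw [integral_const]
  simp [Complex.real_smul, Measure.real]

lemma conj_div_sqrt2 (z : ℂ) :
    conj (z / ((Real.sqrt 2 : ℝ) : ℂ)) * (z / ((Real.sqrt 2 : ℝ) : ℂ)) = conj z * z / 2 := by
  rw [map_div₀, Complex.conj_ofReal, div_mul_div_comm, sqrt2_mul_self]

lemma mfn_mix (a b : Fin n) (hab : a ≠ b) (ξ : Sp n) :
    mfn a a a a (sphereMap (mix a b hab) ξ) + mfn b b b b (sphereMap (mix a b hab) ξ)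
      = (1/2) * (mfn a a a a ξ + mfn b b b b ξ + mfn b a a b ξ + mfn a b b a ξ
          + 4 * mfn a a b b ξ) := by
  have hTa : ((sphereMap (mix a b hab) ξ : Sp n) : En n) a
      = ((ξ:En n) a + (ξ:En n) b) / ((Real.sqrt 2:ℝ):ℂ) := mix_apply_a a b hab _
  have hTb : ((sphereMap (mix a b hab) ξ : Sp n) : En n) b
      = ((ξ:En n) a - (ξ:En n) b) / ((Real.sqrt 2:ℝ):ℂ) := mix_apply_b a b hab _
  unfold mfn
  rw [hTa, hTb]
  set x := (ξ : En n) a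
  set y := (ξ : En n) b
  have e1 : conj ((x+y)/((Real.sqrt 2:ℝ):ℂ)) * ((x+y)/((Real.sqrt 2:ℝ):ℂ))
      * ((x+y)/((Real.sqrt 2:ℝ):ℂ)) * conj ((x+y)/((Real.sqrt 2:ℝ):ℂ))
      = (conj (x+y) * (x+y) / 2) * (conj (x+y) * (x+y) / 2) := by
    rw [← conj_div_sqrt2 (x+y)]; ring
  have e2 : conj ((x-y)/((Real.sqrt 2:ℝ):ℂ)) * ((x-y)/((Real.sqrt 2:ℝ):ℂ))
      * ((x-y)/((Real.sqrt 2:ℝ):ℂ)) * conj ((x-y)/((Real.sqrt 2:ℝ):ℂ))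
      = (conj (x-y) * (x-y) / 2) * (conj (x-y) * (x-y) / 2) := by
    rw [← conj_div_sqrt2 (x-y)]; ring
  rw [e1, e2, map_add, map_sub]
  ring

lemma Mint_mix (a b : Fin n) (hab : a ≠ b) :
    Mint a a a a + Mint b b b b
      = (1/2) * (Mint a a a a + Mint b b b b + Mint b a a b + Mint a b b a
          + 4 * Mint a a b b) := by
  have i1 := int_mfn (n := n) a a a a
  have i2 := int_mfn (n := n) b b b b
  have i3 := int_mfn (n := n) b a a b
  have i4 := int_mfn (n := n) a b b a
  have i5 : Integrable (fun ξ => 4 * mfn a a b b ξ) (σm n) := (int_mfn a a b b).const_mul 4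
  have j1 : Integrable (fun ξ => mfn a a a a (sphereMap (mix a b hab) ξ)) (σm n) :=
    integrable_cont ((continuous_mfn a a a a).comp (continuous_sphereMap _))
  have j2 : Integrable (fun ξ => mfn b b b b (sphereMap (mix a b hab) ξ)) (σm n) :=
    integrable_cont ((continuous_mfn b b b b).comp (continuous_sphereMap _))
  have hL : Mint a a a a + Mint b b b b
      = ∫ ξ, (mfn a a a a (sphereMap (mix a b hab) ξ)
          + mfn b b b b (sphereMap (mix a b hab) ξ)) ∂ σm n := by
    rw [integral_add j1 j2, Mint_comp, Mint_comp]
  conv_lhs => rw [hL]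
  rw [show (fun ξ => mfn a a a a (sphereMap (mix a b hab) ξ)
      + mfn b b b b (sphereMap (mix a b hab) ξ))
      = fun ξ => (1/2) * (mfn a a a a ξ + mfn b b b b ξ + mfn b a a b ξ + mfn a b b a ξ
          + 4 * mfn a a b b ξ) from funext (mfn_mix a b hab), integral_const_mul]
  congr 1
  have I12 : Integrable (fun ξ => mfn a a a a ξ + mfn b b b b ξ) (σm n) := i1.add i2
  have I123 : Integrable (fun ξ => mfn a a a a ξ + mfn b b b b ξ + mfn b a a b ξ) (σm n) :=
    I12.add i3
  have I1234 : Integrable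
      (fun ξ => mfn a a a a ξ + mfn b b b b ξ + mfn b a a b ξ + mfn a b b a ξ) (σm n) :=
    I123.add i4
  rw [integral_add I1234 i5, integral_add I123 i4, integral_add I12 i3, integral_add i1 i2,
    integral_const_mul]
  rfl

lemma Mint_diag (a b : Fin n) : Mint a a a a = Mint b b b b := by
  have h := Mint_perm (Equiv.swap a b) a a a a
  rw [Equiv.swap_apply_left] at h
  exact h.symm

lemma Mint_diag_eq_two (a b : Fin n) (hab : a ≠ b) :
    Mint a a a a = 2 * Mint a a b b := by
  have hmix := Mint_mix a b hab
  have hd : Mint b b b b = Mint a a a a := Mint_diag b a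
  have h1 : Mint b a a b = 0 := Mint_vanish (by
    rintro (⟨h, -⟩ | ⟨h, -⟩)
    · exact hab h.symm
    · exact hab h)
  have h2 : Mint a b b a = 0 := Mint_vanish (by
    rintro (⟨h, -⟩ | ⟨h, -⟩)
    · exact hab h
    · exact hab h.symm)
  rw [hd, h1, h2] at hmix
  linear_combination hmix

lemma Mint_offdiag (p q a b : Fin n) (hpq : p ≠ q) (hab : a ≠ b) :
    Mint a a b b = Mint p p q q := by
  set π : Equiv.Perm (Fin n) := (Equiv.swap p a).trans (Equiv.swap ((Equiv.swap p a) q) b)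
  have hne : a ≠ (Equiv.swap p a) q := by
    intro h
    apply hpq
    have h2 : (Equiv.swap p a) a = (Equiv.swap p a) ((Equiv.swap p a) q) := congrArg _ h
    rwa [Equiv.swap_apply_right, Equiv.swap_apply_self] at h2
  have hπp : π p = a := by
    simp only [π, Equiv.trans_apply, Equiv.swap_apply_left]
    exact Equiv.swap_apply_of_ne_of_ne hne hab
  have hπq : π q = b := by
    simp only [π, Equiv.trans_apply]
    exact Equiv.swap_apply_left _ _
  have h := Mint_perm π p p q q
  rw [hπp, hπq] at h
  exact h

end Berger

namespace Berger
variable {n : ℕ}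
open ComplexConjugate

lemma Mint_aabb (hn : 1 ≤ n) (a b : Fin n) :
    Mint a a b b = ((((σm n) Set.univ).toReal / (n * (n + 1)) : ℝ) : ℂ)
      * (1 + if a = b then 1 else 0) := by
  rcases eq_or_lt_of_le hn with h1 | h2
  · -- n = 1
    have hsub : Subsingleton (Fin n) := by rw [← h1]; infer_instance
    have hab : a = b := Subsingleton.elim a b
    have hsum := Mint_sum (n := n)
    rw [Fintype.sum_subsingleton _ a] at hsum
    rw [Fintype.sum_subsingleton _ a] at hsum
    rw [hab] at hsum ⊢
    rw [hsum, if_pos rfl]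
    have : (n : ℝ) = 1 := by exact_mod_cast h1.symm
    rw [this]
    push_cast
    ring
  · -- 2 ≤ n
    have : Nontrivial (Fin n) := Fin.nontrivial_iff_two_le.mpr h2
    obtain ⟨p, q, hpq⟩ := exists_pair_ne (Fin n)
    set B := Mint p p q q with hB
    have hoff : ∀ x y : Fin n, x ≠ y → Mint x x y y = B :=
      fun x y hxy => Mint_offdiag p q x y hpq hxy
    have hdiag : ∀ x : Fin n, Mint x x x x = 2 * B := by
      intro x
      rw [Mint_diag x p]
      exact Mint_diag_eq_two p q hpq
    have hrow : ∀ x : Fin n, (∑ y, Mint x x y y) = ((n : ℂ) + 1) * B := by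
      intro x
      rw [← Finset.add_sum_erase _ _ (Finset.mem_univ x), hdiag x,
        Finset.sum_congr rfl (fun y hy => hoff x y (Ne.symm (Finset.ne_of_mem_erase hy))),
        Finset.sum_const, Finset.card_erase_of_mem (Finset.mem_univ x), Finset.card_univ,
        Fintype.card_fin, nsmul_eq_mul]
      push_cast [Nat.cast_sub hn]
      ring
    have htot : ((n : ℂ) * ((n : ℂ) + 1)) * B = (((σm n) Set.univ).toReal : ℂ) := by
      have := Mint_sum (n := n)
      rw [Finset.sum_congr rfl fun x _ => hrow x, Finset.sum_const, Finset.card_univ,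
        Fintype.card_fin, nsmul_eq_mul] at this
      rw [← this]; ring
    have hn0 : ((n : ℂ) * ((n : ℂ) + 1)) ≠ 0 := by
      have : (n : ℂ) ≠ 0 := Nat.cast_ne_zero.mpr (by omega)
      have h2' : (n : ℂ) + 1 ≠ 0 := by
        intro h
        have := congrArg Complex.re h
        simp at this
        have : (n : ℝ) = -1 := by linarith
        nlinarith [Nat.cast_nonneg (α := ℝ) n]
      exact mul_ne_zero this h2'
    have hBval : B = (((σm n) Set.univ).toReal : ℂ) / ((n : ℂ) * ((n : ℂ) + 1)) := by
      rw [eq_div_iff hn0]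
      linear_combination htot
    have hcast : ((((σm n) Set.univ).toReal / (n * (n + 1)) : ℝ) : ℂ)
        = (((σm n) Set.univ).toReal : ℂ) / ((n : ℂ) * ((n : ℂ) + 1)) := by
      push_cast
      ring
    by_cases hab : a = b
    · rw [hab, hdiag b, if_pos rfl, hBval, hcast]
      ring
    · rw [hoff a b hab, hBval, hcast, if_neg hab]
      ring

lemma Mint_eq (hn : 1 ≤ n) (i j k l : Fin n) :
    Mint i j k l = ((((σm n) Set.univ).toReal / (n * (n + 1)) : ℝ) : ℂ)
      * ((if i = j then 1 else 0) * (if k = l then 1 else 0)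
        + (if j = l then 1 else 0) * (if k = i then 1 else 0)) := by
  by_cases hA : i = j ∧ k = l
  · obtain ⟨hij, hkl⟩ := hA
    subst hij; subst hkl
    by_cases hik : i = k
    · subst hik
      rw [Mint_aabb hn i i]
      simp
    · rw [Mint_aabb hn i k]
      have hki : ¬(k = i) := fun h => hik h.symm
      simp [hik, hki]
  · by_cases hB : j = l ∧ k = i
    · obtain ⟨hjl, hki⟩ := hB
      subst hjl; subst hki
      -- Mint k j k j = Mint k k j j
      have hswap : Mint k j k j = Mint k k j j := by
        unfold Mint
        congr 1
        funext ξ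
        unfold mfn
        ring
      have hkj : ¬(k = j) := by
        intro h
        exact hA ⟨h, h⟩
      have hjk : ¬(j = k) := fun h => hkj h.symm
      rw [hswap, Mint_aabb hn k j]
      simp [hkj, hjk]
    · rw [Mint_vanish (by tauto)]
      have e1 : (if i = j then (1:ℂ) else 0) * (if k = l then 1 else 0) = 0 := by
        rcases not_and_or.mp hA with h | h <;> simp [h]
      have e2 : (if j = l then (1:ℂ) else 0) * (if k = i then 1 else 0) = 0 := by
        rcases not_and_or.mp hB with h | h <;> simp [h]
      rw [e1, e2]
      ring
end Berger

namespace Berger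
variable {n : ℕ}
open ComplexConjugate

lemma sphere_vol_pos (hn : 1 ≤ n) : 0 < (((σm n) Set.univ)).toReal := by
  have hnt : Nontrivial (En n) := by
    refine ⟨0, WithLp.toLp 2 (fun _ => (1 : ℂ)), fun h => ?_⟩
    have := congrArg (fun v : En n => v ⟨0, by omega⟩) h
    simp at this
  have hdim : 0 < Module.finrank ℝ (En n) := Module.finrank_pos
  have hball : (0 : ENNReal) < volume (ball (0 : En n) 1) := measure_ball_pos volume 0 one_pos
  have hne : (σm n) Set.univ ≠ 0 := by
    unfold σm complexSphereMeasure
    rw [Measure.toSphere_apply_univ]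
    exact mul_ne_zero (by exact_mod_cast Nat.pos_iff_ne_zero.mp hdim) hball.ne'
  exact ENNReal.toReal_pos hne (measure_ne_top _ _)

lemma indicator_expand (c z : ℂ) {m : ℕ} (i j k l : Fin m) :
    z * (c * ((if i = j then (1:ℂ) else 0) * (if k = l then 1 else 0)
      + (if j = l then 1 else 0) * (if k = i then 1 else 0)))
    = c * (if i = j then (if k = l then z else 0) else 0)
      + c * (if j = l then (if k = i then z else 0) else 0) := by
  by_cases h1 : i = j <;> by_cases h2 : k = l <;> by_cases h3 : j = l <;> by_cases h4 : k = i <;>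
    simp [h1, h2, h3, h4] <;> try ring
  all_goals split_ifs <;> ring

lemma main_integral (hn : 1 ≤ n) (Rc : Fin n → Fin n → Fin n → Fin n → ℂ)
    (s sJ : ℝ)
    (hsJ : (sJ : ℂ) = 2 * ∑ i, ∑ j, Rc i i j j)
    (hs : (s : ℂ) = 4 * (∑ i, ∑ j, Rc i j i j) - 2 * ∑ i, ∑ j, Rc i i j j) :
    (∫ ξ : Sp n,
        (∑ i, ∑ j, ∑ k, ∑ l, Rc i j k l
          * (starRingEnd ℂ) ((ξ : En n) i) * (ξ : En n) j * (ξ : En n) k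
          * (starRingEnd ℂ) ((ξ : En n) l)).re ∂ σm n)
      = (((σm n) Set.univ).toReal) / (4 * n * (n + 1)) * (s + 3 * sJ) := by
  -- the integrand as a sum of Rc * mfn
  have hpoint : ∀ ξ : Sp n,
      (∑ i, ∑ j, ∑ k, ∑ l, Rc i j k l
        * (starRingEnd ℂ) ((ξ : En n) i) * (ξ : En n) j * (ξ : En n) k
        * (starRingEnd ℂ) ((ξ : En n) l))
      = ∑ i, ∑ j, ∑ k, ∑ l, Rc i j k l * mfn i j k l ξ := by
    intro ξ
    refine Finset.sum_congr rfl fun i _ => Finset.sum_congr rfl fun j _ =>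
      Finset.sum_congr rfl fun k _ => Finset.sum_congr rfl fun l _ => ?_
    unfold mfn
    ring
  have hQint : Integrable (fun ξ : Sp n => ∑ i, ∑ j, ∑ k, ∑ l, Rc i j k l * mfn i j k l ξ)
      (σm n) :=
    integrable_finset_sum _ fun i _ => integrable_finset_sum _ fun j _ =>
      integrable_finset_sum _ fun k _ => integrable_finset_sum _ fun l _ =>
        (int_mfn i j k l).const_mul _
  have hre : (∫ ξ : Sp n,
      (∑ i, ∑ j, ∑ k, ∑ l, Rc i j k l
        * (starRingEnd ℂ) ((ξ : En n) i) * (ξ : En n) j * (ξ : En n) k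
        * (starRingEnd ℂ) ((ξ : En n) l)).re ∂ σm n)
      = (∫ ξ : Sp n, (∑ i, ∑ j, ∑ k, ∑ l, Rc i j k l * mfn i j k l ξ) ∂ σm n).re := by
    rw [show (fun ξ : Sp n => (∑ i, ∑ j, ∑ k, ∑ l, Rc i j k l
        * (starRingEnd ℂ) ((ξ : En n) i) * (ξ : En n) j * (ξ : En n) k
        * (starRingEnd ℂ) ((ξ : En n) l)).re)
      = fun ξ : Sp n => (∑ i, ∑ j, ∑ k, ∑ l, Rc i j k l * mfn i j k l ξ).re from
        funext fun ξ => by rw [hpoint ξ]]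
    exact integral_re hQint
  rw [hre]
  -- compute the complex integral
  have hQ : (∫ ξ : Sp n, (∑ i, ∑ j, ∑ k, ∑ l, Rc i j k l * mfn i j k l ξ) ∂ σm n)
      = ∑ i, ∑ j, ∑ k, ∑ l, Rc i j k l * Mint i j k l := by
    rw [integral_finset_sum _ fun i _ => integrable_finset_sum _ fun j _ =>
      integrable_finset_sum _ fun k _ => integrable_finset_sum _ fun l _ =>
        (int_mfn i j k l).const_mul _]
    refine Finset.sum_congr rfl fun i _ => ?_
    rw [integral_finset_sum _ fun j _ => integrable_finset_sum _ fun k _ =>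
      integrable_finset_sum _ fun l _ => (int_mfn i j k l).const_mul _]
    refine Finset.sum_congr rfl fun j _ => ?_
    rw [integral_finset_sum _ fun k _ => integrable_finset_sum _ fun l _ =>
      (int_mfn i j k l).const_mul _]
    refine Finset.sum_congr rfl fun k _ => ?_
    rw [integral_finset_sum _ fun l _ => (int_mfn i j k l).const_mul _]
    refine Finset.sum_congr rfl fun l _ => ?_
    exact integral_const_mul _ _
  rw [hQ]
  -- substitute the moment formula
  have hsubst : (∑ i, ∑ j, ∑ k, ∑ l, Rc i j k l * Mint i j k l)
      = ∑ i, ∑ j, ∑ k, ∑ l, (((((σm n) Set.univ).toReal / (n * (n + 1)) : ℝ) : ℂ) * (if i = j then (if k = l then Rc i j k l else 0) else 0)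
          + ((((σm n) Set.univ).toReal / (n * (n + 1)) : ℝ) : ℂ) * (if j = l then (if k = i then Rc i j k l else 0) else 0)) := by
    refine Finset.sum_congr rfl fun i _ => Finset.sum_congr rfl fun j _ =>
      Finset.sum_congr rfl fun k _ => Finset.sum_congr rfl fun l _ => ?_
    rw [Mint_eq hn i j k l]
    exact indicator_expand _ _ i j k l
  rw [hsubst]
  have hsplit : (∑ i, ∑ j, ∑ k, ∑ l,
      (((((σm n) Set.univ).toReal / (n * (n + 1)) : ℝ) : ℂ) * ((if i = j then (if k = l then Rc i j k l else 0) else 0))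
        + ((((σm n) Set.univ).toReal / (n * (n + 1)) : ℝ) : ℂ) * (if j = l then (if k = i then Rc i j k l else 0) else 0)))
      = ((((σm n) Set.univ).toReal / (n * (n + 1)) : ℝ) : ℂ) * (∑ i, ∑ j, ∑ k, ∑ l, (if i = j then (if k = l then Rc i j k l else 0) else 0))
        + ((((σm n) Set.univ).toReal / (n * (n + 1)) : ℝ) : ℂ) * (∑ i, ∑ j, ∑ k, ∑ l, (if j = l then (if k = i then Rc i j k l else 0) else 0)) := by
    simp only [Finset.sum_add_distrib, Finset.mul_sum]
  rw [hsplit]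
  have hS1 : (∑ i, ∑ j, ∑ k, ∑ l,
      (if i = j then (if k = l then Rc i j k l else 0) else 0)) = ∑ i, ∑ k, Rc i i k k := by
    simp [Finset.sum_ite_eq, Finset.sum_ite_eq']
  have hS2 : (∑ i, ∑ j, ∑ k, ∑ l,
      (if j = l then (if k = i then Rc i j k l else 0) else 0)) = ∑ i, ∑ j, Rc i j i j := by
    simp [Finset.sum_ite_eq, Finset.sum_ite_eq']
  rw [hS1, hS2]
  -- use the trace identities
  have htr : (∑ i, ∑ k, Rc i i k k) + (∑ i, ∑ j, Rc i j i j)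
      = (((s : ℂ) + 3 * (sJ : ℂ)) / 4) := by
    have h1 : (∑ i, ∑ j, Rc i i j j) = (sJ : ℂ) / 2 := by linear_combination -hsJ / 2
    have h2 : (∑ i, ∑ j, Rc i j i j) = ((s : ℂ) + (sJ : ℂ)) / 4 := by
      linear_combination (-hs - hsJ) / 4
    rw [h1, h2]
    ring
  have hfin : ((((σm n) Set.univ).toReal / (n * (n + 1)) : ℝ) : ℂ) * (∑ i, ∑ k, Rc i i k k)
      + ((((σm n) Set.univ).toReal / (n * (n + 1)) : ℝ) : ℂ) * (∑ i, ∑ j, Rc i j i j)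
      = (((((σm n) Set.univ).toReal / (n * (n + 1)) * ((s + 3 * sJ) / 4)) : ℝ) : ℂ) := by
    rw [← mul_add, htr]
    push_cast
    ring
  rw [hfin, Complex.ofReal_re]
  have hn0 : (n : ℝ) ≠ 0 := Nat.cast_ne_zero.mpr (by omega)
  have hn1 : (n : ℝ) + 1 ≠ 0 := by positivity
  field_simp

end Berger
end BergerAuxSection

/-- **Berger-type averaging (proof of Corollary 5.3).** Let `(M,J,g)` be an almost Hermitian
manifold of complex dimension `n`.  At each point `p`, the average over the unit sphere
`S_p(M) = {ξ ∈ T_p^{1,0}M : |ξ| = 1} ≅ S^{2n-1}` of the Riemannian holomorphic sectional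
curvature `H_p(ξ) = R(ξ̄,ξ,ξ,ξ̄)` satisfies
`∫_{S_p(M)} H_p(ξ) dV_ξ = (Vol(S^{2n-1})/(4n(n+1))) (s + 3 s_J)(p)`.
In particular, if `H_p(ξ) ≥ 0` for all `p` and `ξ`, then `s + 3 s_J ≥ 0` pointwise. -/
theorem average_of_holomorphic_sectional_curvature_eq_mixed_scalar
    (X : CompactAlmostHermitianCurv) (hn : 1 ≤ X.n) :
    (∀ p : X.M,
      (∫ ξ : Metric.sphere (0 : EuclideanSpace ℂ (Fin X.n)) 1,
          (∑ i, ∑ j, ∑ k, ∑ l, X.Rc p i j k l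
            * (starRingEnd ℂ) ((ξ : EuclideanSpace ℂ (Fin X.n)) i)
            * (ξ : EuclideanSpace ℂ (Fin X.n)) j
            * (ξ : EuclideanSpace ℂ (Fin X.n)) k
            * (starRingEnd ℂ) ((ξ : EuclideanSpace ℂ (Fin X.n)) l)).re
          ∂(complexSphereMeasure X.n))
        = ((complexSphereMeasure X.n) Set.univ).toReal / (4 * X.n * (X.n + 1))
          * (X.s p + 3 * X.sJ p)) ∧
    ((∀ (p : X.M) (ξ : EuclideanSpace ℂ (Fin X.n)),
        0 ≤ (∑ i, ∑ j, ∑ k, ∑ l, X.Rc p i j k l * (starRingEnd ℂ) (ξ i) * ξ j * ξ k *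
          (starRingEnd ℂ) (ξ l)).re) →
      ∀ p, 0 ≤ X.s p + 3 * X.sJ p) := by

  have key : ∀ p : X.M,
      (∫ ξ : Metric.sphere (0 : EuclideanSpace ℂ (Fin X.n)) 1,
          (∑ i, ∑ j, ∑ k, ∑ l, X.Rc p i j k l
            * (starRingEnd ℂ) ((ξ : EuclideanSpace ℂ (Fin X.n)) i)
            * (ξ : EuclideanSpace ℂ (Fin X.n)) j
            * (ξ : EuclideanSpace ℂ (Fin X.n)) k
            * (starRingEnd ℂ) ((ξ : EuclideanSpace ℂ (Fin X.n)) l)).re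
          ∂(complexSphereMeasure X.n))
        = ((complexSphereMeasure X.n) Set.univ).toReal / (4 * X.n * (X.n + 1))
          * (X.s p + 3 * X.sJ p) := by
    intro p
    exact Berger.main_integral hn (X.Rc p) (X.s p) (X.sJ p) (X.sJ_trace p) (X.s_trace p)
  refine ⟨key, fun h p => ?_⟩
  have h2 : 0 ≤ ∫ ξ : Metric.sphere (0 : EuclideanSpace ℂ (Fin X.n)) 1,
      (∑ i, ∑ j, ∑ k, ∑ l, X.Rc p i j k l
        * (starRingEnd ℂ) ((ξ : EuclideanSpace ℂ (Fin X.n)) i)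
        * (ξ : EuclideanSpace ℂ (Fin X.n)) j
        * (ξ : EuclideanSpace ℂ (Fin X.n)) k
        * (starRingEnd ℂ) ((ξ : EuclideanSpace ℂ (Fin X.n)) l)).re
      ∂(complexSphereMeasure X.n) :=
    MeasureTheory.integral_nonneg fun ξ => h p (ξ : EuclideanSpace ℂ (Fin X.n))
  rw [key p] at h2
  have hV : 0 < ((complexSphereMeasure X.n) Set.univ).toReal := Berger.sphere_vol_pos hn
  have hnR : (0 : ℝ) < (X.n : ℝ) := by exact_mod_cast Nat.lt_of_lt_of_le Nat.zero_lt_one hn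
  have hc : 0 < ((complexSphereMeasure X.n) Set.univ).toReal / (4 * X.n * (X.n + 1)) := by
    apply div_pos hV
    positivity
  by_contra hneg
  push_neg at hneg
  nlinarith
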